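/- Let G be a graph with twin vertices a and b (equal open neighborhoods, non-adjacent). Then there exists a minimum fill-in ordering of G in which a and b are eliminated consecutively. -/

import Mathlib

open SimpleGraph

attribute [local instance] Classical.propDecidable

variable {V : Type*} [Fintype V] [DecidableEq V]

/-- The elimination graph `G_x`: delete `x` and complete its neighborhood to a clique.
(The eliminated vertex is kept as an isolated vertex.) -/
def elimG (G : SimpleGraph V) (x : V) : SimpleGraph V where
  Adj u v := u ≠ v ∧ u ≠ x ∧ v ≠ x ∧ (G.Adj u v ∨ (G.Adj x u ∧ G.Adj x v))
  symm := by
    constructor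
    intro u v h
    obtain ⟨h1, h2, h3, h4⟩ := h
    refine ⟨h1.symm, h3, h2, ?_⟩
    rcases h4 with h | ⟨h4, h5⟩
    · exact Or.inl h.symm
    · exact Or.inr ⟨h5, h4⟩
  loopless := by constructor; intro v h; exact h.1 rfl

/-- The deficiency `D(x)`: the set of unordered pairs of distinct, non-adjacent
neighbors of `x`. -/
noncomputable def deficiencyFinset (G : SimpleGraph V) (x : V) : Finset (Sym2 V) :=
  ((Finset.univ ×ˢ Finset.univ : Finset (V × V)).filter
    (fun p => p.1 ≠ p.2 ∧ G.Adj x p.1 ∧ G.Adj x p.2 ∧ ¬ G.Adj p.1 p.2)).image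
    (fun p => s(p.1, p.2))

/-- Successive elimination of a list of vertices. -/
def elimList : SimpleGraph V → List V → SimpleGraph V
  | G, [] => G
  | G, x :: xs => elimList (elimG G x) xs

/-- The fill-in of an elimination ordering given as a list: the total number of
edges added during the elimination process. -/
noncomputable def fillList : SimpleGraph V → List V → ℕ
  | _, [] => 0
  | G, x :: xs => (deficiencyFinset G x).card + fillList (elimG G x) xs

/-- The set of fill edges added during the elimination process. -/
noncomputable def fillEdges : SimpleGraph V → List V → Finset (Sym2 V)
  | _, [] => ∅
  | G, x :: xs => deficiencyFinset G x ∪ fillEdges (elimG G x) xs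

/-- A list is an (elimination) ordering if it enumerates every vertex exactly once. -/
def IsOrdering (L : List V) : Prop := L.Nodup ∧ ∀ v : V, v ∈ L

/-- The minimum fill-in `Φ(G)`. -/
noncomputable def minFillIn (G : SimpleGraph V) : ℕ :=
  sInf {n | ∃ L : List V, IsOrdering L ∧ fillList G L = n}

/-- A vertex is simplicial if its neighborhood is a clique. -/
def IsSimplicial (G : SimpleGraph V) (x : V) : Prop :=
  ∀ a b, G.Adj x a → G.Adj x b → a ≠ b → G.Adj a b

/-- `a` and `b` are indistinguishable: equal closed neighborhoods. -/
def Indistinguishable (G : SimpleGraph V) (a b : V) : Prop :=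
  a ≠ b ∧ insert a (G.neighborSet a) = insert b (G.neighborSet b)

/-- `a` and `b` are twins: equal open neighborhoods (hence non-adjacent). -/
def Twins (G : SimpleGraph V) (a b : V) : Prop :=
  a ≠ b ∧ G.neighborSet a = G.neighborSet b

/-- Chordality: no induced cycle of length at least 4, equivalently every cycle of
length at least 4 has a chord. -/
def IsChordal (G : SimpleGraph V) : Prop :=
  ∀ n : ℕ, 4 ≤ n → ∀ f : ZMod n → V, Function.Injective f →
    ¬ (∀ i j : ZMod n, G.Adj (f i) (f j) ↔ (j = i + 1 ∨ i = j + 1))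

/-- `T` is a triangulation of `G`: a set of non-edges whose addition makes `G` chordal. -/
def IsTriangulation (G : SimpleGraph V) (T : Finset (Sym2 V)) : Prop :=
  (∀ e ∈ T, ¬ e.IsDiag ∧ e ∉ G.edgeSet) ∧
    IsChordal (G ⊔ SimpleGraph.fromEdgeSet (↑T : Set (Sym2 V)))

/-- A minimum triangulation. -/
def IsMinTriangulation (G : SimpleGraph V) (T : Finset (Sym2 V)) : Prop :=
  IsTriangulation G T ∧ ∀ T' : Finset (Sym2 V), IsTriangulation G T' → T.card ≤ T'.card

/-- The graph obtained from `G` by deleting the vertices in `S`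
(deleted vertices are kept as isolated vertices). -/
def deleteSet (G : SimpleGraph V) (S : Set V) : SimpleGraph V where
  Adj u v := G.Adj u v ∧ u ∉ S ∧ v ∉ S
  symm := ⟨fun _ _ ⟨h, hu, hv⟩ => ⟨h.symm, hv, hu⟩⟩
  loopless := ⟨fun v h => G.irrefl h.1⟩

/-!
Take an optimal ordering in which `a` is eliminated before `b`. Eliminating other vertices
keeps `a` and `b` twins, though possibly adjacent ones, and once `a` is eliminated `b` is
simplicial. Moving `b` right behind `a` therefore costs nothing: a simplicial vertex adds no fill
edge, and eliminating it early merely deletes it from the graph seen by the vertices in between,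
whose deficiencies can only shrink. If `b` comes first, the same argument makes `b, a`
consecutive, and two twins can be eliminated in either order with the same result.
-/
section Elimination

variable {V : Type*}

@[simp] lemma elimG_adj {G : SimpleGraph V} {x u v : V} :
    (elimG G x).Adj u v ↔ u ≠ v ∧ u ≠ x ∧ v ≠ x ∧ (G.Adj u v ∨ (G.Adj x u ∧ G.Adj x v)) :=
  Iff.rfl

@[simp] lemma deleteSet_adj {G : SimpleGraph V} {S : Set V} {u v : V} :
    (deleteSet G S).Adj u v ↔ G.Adj u v ∧ u ∉ S ∧ v ∉ S :=
  Iff.rfl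

lemma elimG_deleteSet {G : SimpleGraph V} {S : Set V} {y : V} (hy : y ∉ S) :
    elimG (deleteSet G S) y = deleteSet (elimG G y) S := by
  ext u v
  simp only [elimG_adj, deleteSet_adj]
  tauto

lemma elimList_deleteSet {S : Set V} :
    ∀ {G : SimpleGraph V} {L : List V}, (∀ y ∈ L, y ∉ S) →
      elimList (deleteSet G S) L = deleteSet (elimList G L) S
  | _, [], _ => rfl
  | G, y :: L, hL => by
    rw [elimList, elimList, elimG_deleteSet (hL y List.mem_cons_self)]
    exact elimList_deleteSet fun z hz => hL z (List.mem_cons_of_mem y hz)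

lemma isSimplicial_elimG {G : SimpleGraph V} {x : V} (hx : IsSimplicial G x) (y : V) :
    IsSimplicial (elimG G y) x := by
  rintro u v ⟨-, -, huy, hu⟩ ⟨-, -, hvy, hv⟩ huv
  refine ⟨huv, huy, hvy, ?_⟩
  rcases hu with hxu | ⟨hyx₁, hyu⟩ <;> rcases hv with hxv | ⟨hyx₂, hyv⟩
  · exact .inl (hx u v hxu hxv huv)
  · exact .inr ⟨(hx u y hxu hyx₂.symm huy).symm, hyv⟩
  · exact .inr ⟨hyu, (hx v y hxv hyx₁.symm hvy).symm⟩
  · exact .inr ⟨hyu, hyv⟩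

lemma isSimplicial_elimList {x : V} :
    ∀ {G : SimpleGraph V}, IsSimplicial G x → ∀ L : List V, IsSimplicial (elimList G L) x
  | _, hx, [] => hx
  | _, hx, y :: L => isSimplicial_elimList (isSimplicial_elimG hx y) L

lemma IsSimplicial.elimG_eq_deleteSet {G : SimpleGraph V} {x : V} (hx : IsSimplicial G x) :
    elimG G x = deleteSet G {x} := by
  ext u v
  simp only [elimG_adj, deleteSet_adj, Set.mem_singleton_iff]
  constructor
  · rintro ⟨huv, hux, hvx, huv' | ⟨hxu, hxv⟩⟩
    · exact ⟨huv', hux, hvx⟩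
    · exact ⟨hx u v hxu hxv huv, hux, hvx⟩
  · rintro ⟨huv, hux, hvx⟩
    exact ⟨huv.ne, hux, hvx, .inl huv⟩

variable [Fintype V] [DecidableEq V]

lemma mem_deficiencyFinset {G : SimpleGraph V} {x : V} {e : Sym2 V} :
    e ∈ deficiencyFinset G x ↔
      ∃ u v, u ≠ v ∧ G.Adj x u ∧ G.Adj x v ∧ ¬ G.Adj u v ∧ s(u, v) = e := by
  simp [deficiencyFinset, and_assoc]

lemma IsSimplicial.deficiencyFinset_eq_empty {G : SimpleGraph V} {x : V}
    (hx : IsSimplicial G x) : deficiencyFinset G x = ∅ := by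
  ext e
  simp only [mem_deficiencyFinset, Finset.notMem_empty, iff_false]
  rintro ⟨u, v, huv, hxu, hxv, hnot, -⟩
  exact hnot (hx u v hxu hxv huv)

lemma deficiencyFinset_deleteSet_subset (G : SimpleGraph V) (S : Set V) (y : V) :
    deficiencyFinset (deleteSet G S) y ⊆ deficiencyFinset G y := by
  intro e he
  rw [mem_deficiencyFinset] at he ⊢
  obtain ⟨u, v, huv, ⟨hyu, -, hu⟩, ⟨hyv, -, hv⟩, hnot, rfl⟩ := he
  exact ⟨u, v, huv, hyu, hyv, fun h => hnot ⟨h, hu, hv⟩, rfl⟩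

lemma fillList_cons (G : SimpleGraph V) (y : V) (L : List V) :
    fillList G (y :: L) = (deficiencyFinset G y).card + fillList (elimG G y) L :=
  rfl

lemma fillList_append : ∀ (G : SimpleGraph V) (P L : List V),
    fillList G (P ++ L) = fillList G P + fillList (elimList G P) L
  | _, [], _ => by simp [fillList, elimList]
  | G, y :: P, L => by
    rw [List.cons_append, fillList_cons, fillList_cons, fillList_append, elimList, add_assoc]

lemma fillList_deleteSet_le {S : Set V} :
    ∀ {G : SimpleGraph V} {L : List V}, (∀ y ∈ L, y ∉ S) →
      fillList (deleteSet G S) L ≤ fillList G L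
  | _, [], _ => le_rfl
  | G, y :: L, hL => by
    rw [fillList_cons, fillList_cons, elimG_deleteSet (hL y List.mem_cons_self)]
    exact add_le_add (Finset.card_le_card (deficiencyFinset_deleteSet_subset G S y))
      (fillList_deleteSet_le fun z hz => hL z (List.mem_cons_of_mem y hz))

lemma IsSimplicial.fillList_cons_le {G : SimpleGraph V} {x : V} (hx : IsSimplicial G x)
    {Q : List V} (hxQ : x ∉ Q) (R : List V) :
    fillList G (x :: (Q ++ R)) ≤ fillList G (Q ++ x :: R) := by
  have hQ : ∀ y ∈ Q, y ∉ ({x} : Set V) := fun y hy h => hxQ (h ▸ hy)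
  have hxQ' := isSimplicial_elimList hx Q
  calc fillList G (x :: (Q ++ R))
      = fillList (deleteSet G {x}) Q + fillList (deleteSet (elimList G Q) {x}) R := by
        rw [fillList_cons, hx.deficiencyFinset_eq_empty, hx.elimG_eq_deleteSet,
          fillList_append, elimList_deleteSet hQ, Finset.card_empty, zero_add]
    _ ≤ fillList G Q + fillList (deleteSet (elimList G Q) {x}) R :=
        Nat.add_le_add_right (fillList_deleteSet_le hQ) _
    _ = fillList G (Q ++ x :: R) := by
        rw [fillList_append, fillList_cons, hxQ'.deficiencyFinset_eq_empty,
          hxQ'.elimG_eq_deleteSet, Finset.card_empty, zero_add]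

end Elimination

section WeakTwins

variable {V : Type*}

/-- `a` and `b` are true or false twins. -/
def WeakTwins (G : SimpleGraph V) (a b : V) : Prop :=
  ∀ u, u ≠ a → u ≠ b → (G.Adj a u ↔ G.Adj b u)

lemma WeakTwins.symm {G : SimpleGraph V} {a b : V} (h : WeakTwins G a b) : WeakTwins G b a :=
  fun u hub hua => (h u hua hub).symm

lemma Twins.weakTwins {G : SimpleGraph V} {a b : V} (h : Twins G a b) : WeakTwins G a b :=
  fun u _ _ => Set.ext_iff.mp h.2 u

lemma weakTwins_elimG {G : SimpleGraph V} {a b y : V} (h : WeakTwins G a b)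
    (hya : y ≠ a) (hyb : y ≠ b) : WeakTwins (elimG G y) a b := by
  intro u hua hub
  have hyu := h u hua hub
  have hay := h y hya hyb
  simp only [elimG_adj, G.adj_comm y]
  constructor
  · rintro ⟨-, -, huy, hadj | ⟨hya', hyu'⟩⟩
    · exact ⟨Ne.symm hub, Ne.symm hyb, huy, .inl (hyu.mp hadj)⟩
    · exact ⟨Ne.symm hub, Ne.symm hyb, huy, .inr ⟨hay.mp hya', hyu'⟩⟩
  · rintro ⟨-, -, huy, hadj | ⟨hyb', hyu'⟩⟩
    · exact ⟨Ne.symm hua, Ne.symm hya, huy, .inl (hyu.mpr hadj)⟩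
    · exact ⟨Ne.symm hua, Ne.symm hya, huy, .inr ⟨hay.mpr hyb', hyu'⟩⟩

lemma weakTwins_elimList {a b : V} :
    ∀ {G : SimpleGraph V} {L : List V}, WeakTwins G a b → a ∉ L → b ∉ L →
      WeakTwins (elimList G L) a b
  | _, [], h, _, _ => h
  | _, y :: _, h, haL, hbL => by
    rw [List.mem_cons, not_or] at haL hbL
    rw [elimList]
    exact weakTwins_elimList (weakTwins_elimG h (Ne.symm haL.1) (Ne.symm hbL.1)) haL.2 hbL.2

lemma WeakTwins.isSimplicial_elimG {G : SimpleGraph V} {a b : V} (h : WeakTwins G a b) :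
    IsSimplicial (elimG G a) b := by
  have hau : ∀ u, (elimG G a).Adj b u → G.Adj a u := by
    rintro u ⟨hbu, -, hua, hbu' | ⟨-, hau⟩⟩
    exacts [(h u hua hbu.symm).mpr hbu', hau]
  intro u v hu hv huv
  exact ⟨huv, hu.2.2.1, hv.2.2.1, .inr ⟨hau u hu, hau v hv⟩⟩

lemma WeakTwins.elimG_elimG_comm {G : SimpleGraph V} {a b : V} (h : WeakTwins G a b) :
    elimG (elimG G a) b = elimG (elimG G b) a := by
  ext u v
  simp only [elimG_adj]
  by_cases hu : u = a ∨ u = b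
  · rcases hu with rfl | rfl <;> simp
  by_cases hv : v = a ∨ v = b
  · rcases hv with rfl | rfl <;> simp
  rw [not_or] at hu hv
  simp only [← h u hu.1 hu.2, ← h v hv.1 hv.2, G.adj_comm b a, hu.1, hu.2, hv.1, hv.2,
    Ne.symm hu.1, Ne.symm hv.1, ne_comm (a := b), ne_eq, not_false_eq_true, true_and]

variable [Fintype V] [DecidableEq V]

lemma WeakTwins.deficiencyFinset_subset {G : SimpleGraph V} {a b : V} (h : WeakTwins G a b) :
    deficiencyFinset G a ⊆ deficiencyFinset G b := by
  intro e he
  rw [mem_deficiencyFinset] at he ⊢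
  obtain ⟨u, v, huv, hau, hav, hnot, rfl⟩ := he
  have hub : u ≠ b := by
    rintro rfl
    exact hnot ((h v hav.ne' huv.symm).mp hav)
  have hvb : v ≠ b := by
    rintro rfl
    exact hnot ((h u hau.ne' huv).mp hau).symm
  exact ⟨u, v, huv, (h u hau.ne' hub).mp hau, (h v hav.ne' hvb).mp hav, hnot, rfl⟩

lemma WeakTwins.deficiencyFinset_eq {G : SimpleGraph V} {a b : V} (h : WeakTwins G a b) :
    deficiencyFinset G a = deficiencyFinset G b :=
  h.deficiencyFinset_subset.antisymm h.symm.deficiencyFinset_subset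

lemma WeakTwins.fillList_cons_cons_comm {G : SimpleGraph V} {a b : V} (h : WeakTwins G a b)
    (L : List V) : fillList G (a :: b :: L) = fillList G (b :: a :: L) := by
  simp only [fillList_cons, h.isSimplicial_elimG.deficiencyFinset_eq_empty,
    h.symm.isSimplicial_elimG.deficiencyFinset_eq_empty, h.deficiencyFinset_eq,
    h.elimG_elimG_comm]

lemma WeakTwins.fillList_cons_cons_le {G : SimpleGraph V} {a b : V} (h : WeakTwins G a b)
    {Q : List V} (hbQ : b ∉ Q) (R : List V) :
    fillList G (a :: b :: (Q ++ R)) ≤ fillList G (a :: (Q ++ b :: R)) :=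
  Nat.add_le_add_left (h.isSimplicial_elimG.fillList_cons_le hbQ R) _

lemma WeakTwins.fillList_append_cons_cons_comm {G : SimpleGraph V} {a b : V}
    (h : WeakTwins G a b) {P : List V} (haP : a ∉ P) (hbP : b ∉ P) (L : List V) :
    fillList G (P ++ a :: b :: L) = fillList G (P ++ b :: a :: L) := by
  rw [fillList_append, fillList_append,
    (weakTwins_elimList h haP hbP).fillList_cons_cons_comm]

lemma WeakTwins.fillList_append_cons_cons_le {G : SimpleGraph V} {a b : V}
    (h : WeakTwins G a b) {P Q : List V} (haP : a ∉ P) (hbP : b ∉ P) (hbQ : b ∉ Q)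
    (R : List V) :
    fillList G (P ++ a :: b :: (Q ++ R)) ≤ fillList G (P ++ a :: (Q ++ b :: R)) := by
  rw [fillList_append, fillList_append]
  exact Nat.add_le_add_left ((weakTwins_elimList h haP hbP).fillList_cons_cons_le hbQ R) _

end WeakTwins

section Orderings

variable {V : Type*}

lemma IsOrdering.perm {L L' : List V} (hL : IsOrdering L) (p : L.Perm L') : IsOrdering L' :=
  ⟨p.nodup_iff.mp hL.1, fun v => p.mem_iff.mp (hL.2 v)⟩

variable [Fintype V] [DecidableEq V]

lemma minFillIn_le (G : SimpleGraph V) {L : List V} (hL : IsOrdering L) :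
    minFillIn G ≤ fillList G L :=
  Nat.sInf_le ⟨L, hL, rfl⟩

lemma exists_isOrdering_fillList_eq_minFillIn (G : SimpleGraph V) :
    ∃ L : List V, IsOrdering L ∧ fillList G L = minFillIn G := by
  have hne : {n | ∃ L : List V, IsOrdering L ∧ fillList G L = n}.Nonempty :=
    ⟨_, Finset.univ.toList, ⟨Finset.nodup_toList _, by simp⟩, rfl⟩
  exact Nat.sInf_mem hne

lemma WeakTwins.exists_isOrdering_consecutive_le {G : SimpleGraph V} {a b : V}
    (h : WeakTwins G a b) (hab : a ≠ b) {L : List V} (hL : IsOrdering L) :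
    ∃ L1 L2 : List V, IsOrdering (L1 ++ a :: b :: L2) ∧
      fillList G (L1 ++ a :: b :: L2) ≤ fillList G L := by
  wlog hfirst : ∃ P Q R, L = P ++ a :: (Q ++ b :: R) generalizing a b
  · obtain ⟨P, Q, R, rfl⟩ : ∃ P Q R, L = P ++ b :: (Q ++ a :: R) := by
      obtain ⟨P, T, rfl⟩ := List.append_of_mem (hL.2 a)
      rcases List.mem_append.mp (hL.2 b) with hbP | hbT
      · obtain ⟨P₁, P₂, rfl⟩ := List.append_of_mem hbP
        exact ⟨P₁, P₂, T, by simp⟩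
      · obtain rfl | hbT := List.mem_cons.mp hbT
        · exact absurd rfl hab
        · obtain ⟨Q, R, rfl⟩ := List.append_of_mem hbT
          exact absurd ⟨P, Q, R, rfl⟩ hfirst
    obtain ⟨L1, L2, hord, hle⟩ := this h.symm hab.symm ⟨P, Q, R, rfl⟩
    have hL1 := List.disjoint_of_nodup_append hord.1
    have hbL1 : b ∉ L1 := fun hb => hL1 hb List.mem_cons_self
    have haL1 : a ∉ L1 := fun ha => hL1 ha (List.mem_cons_of_mem b List.mem_cons_self)
    refine ⟨L1, L2, hord.perm ((List.Perm.swap a b L2).append_left L1), ?_⟩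
    rwa [h.fillList_append_cons_cons_comm haL1 hbL1]
  obtain ⟨P, Q, R, rfl⟩ := hfirst
  have hP := List.disjoint_of_nodup_append hL.1
  have hQ := List.disjoint_of_nodup_append (hL.1.of_append_right.of_cons)
  refine ⟨P, Q ++ R, hL.perm ((List.perm_middle.cons a).append_left P), ?_⟩
  exact h.fillList_append_cons_cons_le (fun ha => hP ha List.mem_cons_self)
    (fun hb => hP hb (List.mem_cons_of_mem a (List.mem_append_right Q List.mem_cons_self)))
    (fun hb => hQ hb List.mem_cons_self) R

end Orderings

/-- if `a` and `b` are twins, there is a minimum fill-in ordering in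
which `a` and `b` are eliminated consecutively. -/
theorem stmt_8 (G : SimpleGraph V) (a b : V) (h : Twins G a b) :
    ∃ L1 L2 : List V, IsOrdering (L1 ++ a :: b :: L2) ∧
      fillList G (L1 ++ a :: b :: L2) = minFillIn G := by
  obtain ⟨L, hL, hmin⟩ := exists_isOrdering_fillList_eq_minFillIn G
  obtain ⟨L1, L2, hord, hle⟩ := h.weakTwins.exists_isOrdering_consecutive_le h.1 hL
  exact ⟨L1, L2, hord, le_antisymm (hmin ▸ hle) (minFillIn_le G hord)⟩
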